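/- In Example 5.1 with cost c(x,a) = -1 for x ≥ 1, c(0,·) = 0, condition (C) fails: for every n, inf_{N≥n} inf_π Σ_{t=n+1}^N E_1^π[c(X_{t-1}, A_t)] ≤ -2, since under strategy φⁿ one has E_1^{φⁿ}[Σ_{t=n+1}^∞ c(X_{t-1},A_t)] = -2. -/

import Mathlib

/-- Transition kernel of the MDP of Example 5.1 on state space `ℕ` with actions `{1,2}`:
`0` is absorbing; action `1`: `p(0|x,1) = 2^{-x}`, `p(x|x,1) = 1 - 2^{-x}`;
action `2`: `p(0|x,2) = 1/2`, `p(x+1|x,2) = 1/2`. -/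
noncomputable def Pkernel (a x y : ℕ) : ℝ :=
  if x = 0 then (if y = 0 then 1 else 0)
  else if a = 1 then
    (if y = 0 then (1/2 : ℝ)^x else if y = x then 1 - (1/2 : ℝ)^x else 0)
  else (if y = 0 then (1/2 : ℝ) else if y = x + 1 then (1/2 : ℝ) else 0)

/-- A history is a list of (action, resulting state) pairs, most recent first.
`curState x₀ h` is the current state after history `h` starting from `x₀`. -/
def curState (x₀ : ℕ) : List (ℕ × ℕ) → ℕ
  | [] => x₀
  | (_, y) :: _ => y

/-- A (randomized, history-dependent) strategy assigns to the initial state and a history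
a probability distribution over actions; `σ x₀ h a` is the probability of action `a`. -/
def IsStrategy (σ : ℕ → List (ℕ × ℕ) → ℕ → ℝ) : Prop :=
  ∀ x₀ h, (∀ a, 0 ≤ σ x₀ h a) ∧ σ x₀ h 1 + σ x₀ h 2 = 1
    ∧ ∀ a, a ≠ 1 → a ≠ 2 → σ x₀ h a = 0

/-- Probability that the controlled process under `σ` started at `x₀` realizes the
trajectory recorded by the history `h` (most recent pair first). -/
noncomputable def trajProb (σ : ℕ → List (ℕ × ℕ) → ℕ → ℝ) (x₀ : ℕ) :
    List (ℕ × ℕ) → ℝ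
  | [] => 1
  | (a, y) :: h => trajProb σ x₀ h * σ x₀ h a * Pkernel a (curState x₀ h) y

/-- `Pne σ x₀ t`: probability that under strategy `σ` started at `x₀` the state at time `t`
is nonzero, i.e. `P^σ_{x₀}(X_t ≠ 0) = P^σ_{x₀}(T₀ > t)`. -/
noncomputable def Pne (σ : ℕ → List (ℕ × ℕ) → ℕ → ℝ) (x₀ t : ℕ) : ℝ :=
  ∑' h : {h : List (ℕ × ℕ) // h.length = t ∧ curState x₀ h ≠ 0}, trajProb σ x₀ h.1

/-- Expected hitting time of `0`: `E^σ_{x₀}[T₀] = ∑_{t=0}^∞ P^σ_{x₀}(T₀ > t)`. -/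
noncomputable def hittingE (σ : ℕ → List (ℕ × ℕ) → ℕ → ℝ) (x₀ : ℕ) : ℝ :=
  ∑' t : ℕ, Pne σ x₀ t

/-- The deterministic stationary strategy `φⁿ` (action `2` on states `≤ n`, action `1` on
states `> n`) viewed as a randomized strategy. -/
noncomputable def sigmaPhi (n : ℕ) : ℕ → List (ℕ × ℕ) → ℕ → ℝ :=
  fun x₀ h a => if a = (if curState x₀ h ≤ n then 2 else 1) then 1 else 0

open Finset

/-! ### Auxiliary development -/

section Aux

@[simp] lemma curState_cons (x₀ : ℕ) (p : ℕ × ℕ) (h : List (ℕ × ℕ)) :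
    curState x₀ (p :: h) = p.2 := by cases p; rfl

lemma trajProb_cons (σ : ℕ → List (ℕ × ℕ) → ℕ → ℝ) (x₀ : ℕ) (p : ℕ × ℕ)
    (h : List (ℕ × ℕ)) :
    trajProb σ x₀ (p :: h)
      = trajProb σ x₀ h * σ x₀ h p.1 * Pkernel p.1 (curState x₀ h) p.2 := by
  cases p; rfl

lemma Pkernel_nonneg (a x y : ℕ) : 0 ≤ Pkernel a x y := by
  have h1 : ((1:ℝ)/2)^x ≤ 1 := pow_le_one₀ (by norm_num) (by norm_num)
  have h2 : (0:ℝ) ≤ (1/2:ℝ)^x := by positivity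
  unfold Pkernel; split_ifs <;> linarith

lemma trajProb_nonneg {σ} (hσ : IsStrategy σ) (x₀ : ℕ) :
    ∀ h, 0 ≤ trajProb σ x₀ h := by
  intro h
  induction h with
  | nil => norm_num [trajProb]
  | cons p h ih =>
      rw [trajProb_cons]
      exact mul_nonneg (mul_nonneg ih ((hσ x₀ h).1 p.1)) (Pkernel_nonneg _ _ _)

/-- Finset of lists of a given length with entries in `S`. -/
def Hfin (S : Finset (ℕ × ℕ)) : ℕ → Finset (List (ℕ × ℕ))
  | 0 => {[]}
  | t+1 => (S ×ˢ Hfin S t).image (fun p => p.1 :: p.2)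

lemma Hfin_length {S : Finset (ℕ × ℕ)} : ∀ {t l}, l ∈ Hfin S t → l.length = t := by
  intro t
  induction t with
  | zero => intro l hl; simp [Hfin] at hl; simp [hl]
  | succ t ih =>
      intro l hl
      simp only [Hfin, mem_image, mem_product] at hl
      obtain ⟨⟨p, h⟩, ⟨_, hh⟩, rfl⟩ := hl
      simp [ih hh]

lemma Hfin_mono {S S' : Finset (ℕ × ℕ)} (hS : S ⊆ S') :
    ∀ t, Hfin S t ⊆ Hfin S' t := by
  intro t
  induction t with
  | zero => simp [Hfin]
  | succ t ih =>
      intro l hl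
      simp only [Hfin, mem_image, mem_product] at hl ⊢
      obtain ⟨⟨p, h⟩, ⟨hp, hh⟩, rfl⟩ := hl
      exact ⟨⟨p, h⟩, ⟨hS hp, ih hh⟩, rfl⟩

lemma sum_Hfin_succ (S : Finset (ℕ × ℕ)) (t : ℕ) (g : List (ℕ × ℕ) → ℝ) :
    ∑ l ∈ Hfin S (t+1), g l = ∑ p ∈ S, ∑ h ∈ Hfin S t, g (p :: h) := by
  rw [show Hfin S (t+1) = (S ×ˢ Hfin S t).image (fun p => p.1 :: p.2) from rfl]
  rw [Finset.sum_image, Finset.sum_product]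
  intro p _ q _ hpq
  simp only [List.cons.injEq] at hpq
  exact Prod.ext hpq.1 hpq.2

/-- The finsets carrying the support of length-`t` trajectories from `x₀ = 1`. -/
def St (t : ℕ) : Finset (ℕ × ℕ) := ({1, 2} : Finset ℕ) ×ˢ range (t+2)

def HF (t : ℕ) : Finset (List (ℕ × ℕ)) := Hfin (St t) t

lemma St_mono {t t' : ℕ} (h : t ≤ t') : St t ⊆ St t' := by
  apply Finset.product_subset_product_right
  exact Finset.range_subset_range.2 (by omega)

lemma traj_support {σ} (hσ : IsStrategy σ) :
    ∀ h, trajProb σ 1 h ≠ 0 →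
      curState 1 h ≤ 1 + h.length ∧ ∀ m, h.length ≤ m → h ∈ Hfin (St m) h.length := by
  intro h
  induction h with
  | nil =>
      intro _
      refine ⟨by simp [curState], fun m _ => ?_⟩
      simp [Hfin]
  | cons p h ih =>
      intro hne
      rw [trajProb_cons] at hne
      have h1 : trajProb σ 1 h ≠ 0 := fun h0 => hne (by simp [h0])
      have h2 : σ 1 h p.1 ≠ 0 := fun h0 => hne (by simp [h0])
      have h3 : Pkernel p.1 (curState 1 h) p.2 ≠ 0 := fun h0 => hne (by simp [h0])
      obtain ⟨hcur, hmem⟩ := ih h1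
      have ha : p.1 = 1 ∨ p.1 = 2 := by
        by_contra hc
        push_neg at hc
        exact h2 ((hσ 1 h).2.2 p.1 hc.1 hc.2)
      have hy : p.2 ≤ curState 1 h + 1 := by
        unfold Pkernel at h3
        split_ifs at h3 <;> first | omega | exact absurd rfl h3
      constructor
      · simp only [curState_cons, List.length_cons]; omega
      · intro m hm
        simp only [List.length_cons] at hm
        have hy2 : p.2 < m + 2 := by omega
        show p :: h ∈ Hfin (St m) (h.length + 1)
        simp only [Hfin, mem_image, mem_product]
        refine ⟨⟨p, h⟩, ⟨?_, hmem m (by omega)⟩, rfl⟩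
        simp only [St, mem_product, mem_insert, mem_singleton, mem_range]
        exact ⟨ha, hy2⟩

/-- `Pne` as a finite sum. -/
lemma Pne_eq_sum {σ} (hσ : IsStrategy σ) (t : ℕ) :
    Pne σ 1 t = ∑ h ∈ HF t, (if curState 1 h = 0 then 0 else trajProb σ 1 h) := by
  have h1 : Pne σ 1 t = ∑' (h : List (ℕ × ℕ)),
      Set.indicator {h : List (ℕ × ℕ) | h.length = t ∧ curState 1 h ≠ 0}
        (trajProb σ 1) h := tsum_subtype _ _
  rw [h1, tsum_eq_sum (s := HF t)]
  · apply Finset.sum_congr rfl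
    intro h hh
    have hlen : h.length = t := Hfin_length hh
    by_cases hc : curState 1 h = 0
    · simp [Set.indicator_apply, hc]
    · simp [Set.indicator_apply, hc, hlen]
  · intro h hh
    rw [Set.indicator_apply]
    split_ifs with hmem
    · by_contra hne
      have hs := (traj_support hσ h hne).2 t (le_of_eq hmem.1)
      rw [hmem.1] at hs
      exact hh hs
    · rfl

/-- One-step expansion of an expectation-type sum. -/
lemma sum_step {σ} (hσ : IsStrategy σ) (t : ℕ) (f : ℕ → ℝ) :
    ∑ h ∈ HF (t+1), trajProb σ 1 h * f (curState 1 h)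
      = ∑ h ∈ HF t, trajProb σ 1 h *
          (∑ p ∈ St (t+1), σ 1 h p.1 * Pkernel p.1 (curState 1 h) p.2 * f p.2) := by
  rw [show HF (t+1) = Hfin (St (t+1)) (t+1) from rfl, sum_Hfin_succ]
  have hsub : ∀ p : ℕ × ℕ,
      ∑ h ∈ Hfin (St (t+1)) t, trajProb σ 1 (p :: h) * f (curState 1 (p :: h))
        = ∑ h ∈ HF t, trajProb σ 1 (p :: h) * f (curState 1 (p :: h)) := by
    intro p
    refine (Finset.sum_subset (Hfin_mono (St_mono (by omega)) t) ?_).symm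
    intro h hh hnot
    have htp : trajProb σ 1 h = 0 := by
      by_contra hne
      have hs := (traj_support hσ h hne).2 t (le_of_eq (Hfin_length hh))
      rw [Hfin_length hh] at hs
      exact hnot hs
    rw [trajProb_cons, htp]
    simp
  calc ∑ p ∈ St (t+1), ∑ h ∈ Hfin (St (t+1)) t,
        trajProb σ 1 (p :: h) * f (curState 1 (p :: h))
      = ∑ p ∈ St (t+1), ∑ h ∈ HF t,
        trajProb σ 1 (p :: h) * f (curState 1 (p :: h)) := by
        exact Finset.sum_congr rfl (fun p _ => hsub p)
    _ = ∑ h ∈ HF t, ∑ p ∈ St (t+1),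
        trajProb σ 1 (p :: h) * f (curState 1 (p :: h)) := Finset.sum_comm
    _ = ∑ h ∈ HF t, trajProb σ 1 h *
          (∑ p ∈ St (t+1), σ 1 h p.1 * Pkernel p.1 (curState 1 h) p.2 * f p.2) := by
        apply Finset.sum_congr rfl
        intro h _
        rw [Finset.mul_sum]
        apply Finset.sum_congr rfl
        intro p _
        rw [trajProb_cons, curState_cons]
        ring

/-- Pointwise evaluation of `∑_y P(y|x,a) f(y)` for `f` vanishing at `0`. -/
lemma Pk_sum (t : ℕ) (f : ℕ → ℝ) (hf0 : f 0 = 0) (a x : ℕ) (hx : x ≤ t + 1) :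
    ∑ y ∈ range (t+3), Pkernel a x y * f y
      = if x = 0 then 0 else
          if a = 1 then (1 - (1/2:ℝ)^x) * f x else (1/2:ℝ) * f (x+1) := by
  by_cases hx0 : x = 0
  · simp only [hx0, if_true]
    apply Finset.sum_eq_zero
    intro y _
    unfold Pkernel
    simp only [if_true]
    split_ifs with h
    · simp [h, hf0]
    · simp
  · rw [if_neg hx0]
    by_cases ha : a = 1
    · rw [if_pos ha]
      have : ∀ y, Pkernel a x y * f y
          = if y = x then (1 - (1/2:ℝ)^x) * f x else 0 := by
        intro y
        unfold Pkernel
        rw [if_neg hx0, if_pos ha]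
        by_cases hy0 : y = 0
        · rw [if_pos hy0, hy0, hf0, if_neg (Ne.symm hx0)]
          ring
        · rw [if_neg hy0]
          split_ifs with h
          · rw [h]
          · ring
      rw [Finset.sum_congr rfl (fun y _ => this y)]
      rw [Finset.sum_ite_eq' (range (t+3)) x (fun _ => (1 - (1/2:ℝ)^x) * f x)]
      rw [if_pos (mem_range.2 (by omega))]
    · rw [if_neg ha]
      have : ∀ y, Pkernel a x y * f y
          = if y = x + 1 then (1/2:ℝ) * f (x+1) else 0 := by
        intro y
        unfold Pkernel
        rw [if_neg hx0, if_neg ha]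
        by_cases hy0 : y = 0
        · rw [if_pos hy0, hy0, hf0, if_neg (by omega)]
          ring
        · rw [if_neg hy0]
          split_ifs with h
          · rw [h]
          · ring
      rw [Finset.sum_congr rfl (fun y _ => this y)]
      rw [Finset.sum_ite_eq' (range (t+3)) (x+1) (fun _ => (1/2:ℝ) * f (x+1))]
      rw [if_pos (mem_range.2 (by omega))]

/-- Inner sum over `St (t+1)` in terms of the action values. -/
lemma innerSumEval (σ : ℕ → List (ℕ × ℕ) → ℕ → ℝ) (t : ℕ) (f : ℕ → ℝ) (hf0 : f 0 = 0)
    (x : ℕ) (hx : x ≤ t + 1) (h : List (ℕ × ℕ)) :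
    ∑ p ∈ St (t+1), σ 1 h p.1 * Pkernel p.1 x p.2 * f p.2
      = σ 1 h 1 * (if x = 0 then 0 else (1 - (1/2:ℝ)^x) * f x)
        + σ 1 h 2 * (if x = 0 then 0 else (1/2:ℝ) * f (x+1)) := by
  rw [show St (t+1) = ({1, 2} : Finset ℕ) ×ˢ range (t+3) from rfl]
  rw [Finset.sum_product]
  have key : ∀ a : ℕ, ∑ y ∈ range (t+3), σ 1 h a * Pkernel a x y * f y
      = σ 1 h a * ∑ y ∈ range (t+3), Pkernel a x y * f y := by
    intro a
    rw [Finset.mul_sum]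
    exact Finset.sum_congr rfl (fun y _ => by ring)
  rw [Finset.sum_insert (by norm_num), Finset.sum_singleton, key 1, key 2,
    Pk_sum t f hf0 1 x hx, Pk_sum t f hf0 2 x hx]
  norm_num

noncomputable def chi : ℕ → ℝ := fun y => if y = 0 then 0 else 1
noncomputable def wgt : ℕ → ℝ := fun y => if y = 0 then 0 else 2^y + 2

lemma chi_nonneg (y : ℕ) : 0 ≤ chi y := by unfold chi; split_ifs <;> norm_num
lemma wgt_nonneg (y : ℕ) : 0 ≤ wgt y := by
  unfold wgt; split_ifs <;> positivity

noncomputable def Wfun (σ : ℕ → List (ℕ × ℕ) → ℕ → ℝ) (t : ℕ) : ℝ :=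
  ∑ h ∈ HF t, trajProb σ 1 h * wgt (curState 1 h)

lemma Pne_eq' {σ} (hσ : IsStrategy σ) (t : ℕ) :
    Pne σ 1 t = ∑ h ∈ HF t, trajProb σ 1 h * chi (curState 1 h) := by
  rw [Pne_eq_sum hσ t]
  apply Finset.sum_congr rfl
  intro h _
  unfold chi
  split_ifs <;> simp

lemma Pne_nonneg {σ} (hσ : IsStrategy σ) (t : ℕ) : 0 ≤ Pne σ 1 t := by
  rw [Pne_eq' hσ t]
  exact Finset.sum_nonneg fun h _ =>
    mul_nonneg (trajProb_nonneg hσ 1 h) (chi_nonneg _)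

lemma W_nonneg {σ} (hσ : IsStrategy σ) (t : ℕ) : 0 ≤ Wfun σ t :=
  Finset.sum_nonneg fun h _ =>
    mul_nonneg (trajProb_nonneg hσ 1 h) (wgt_nonneg _)

lemma W_zero (σ : ℕ → List (ℕ × ℕ) → ℕ → ℝ) : Wfun σ 0 = 4 := by
  unfold Wfun
  rw [show HF 0 = {[]} from rfl, Finset.sum_singleton]
  show trajProb σ 1 [] * wgt (curState 1 []) = 4
  rw [show trajProb σ 1 [] = 1 from rfl, show curState 1 [] = 1 from rfl]
  norm_num [wgt]

lemma W_step {σ} (hσ : IsStrategy σ) (t : ℕ) :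
    Pne σ 1 t + Wfun σ (t+1) ≤ Wfun σ t := by
  rw [Pne_eq' hσ t]
  unfold Wfun
  rw [sum_step hσ t wgt, ← Finset.sum_add_distrib]
  apply Finset.sum_le_sum
  intro h hh
  by_cases htp : trajProb σ 1 h = 0
  · simp [htp]
  have hx : curState 1 h ≤ t + 1 := by
    have := (traj_support hσ h htp).1
    rw [Hfin_length hh] at this
    omega
  rw [innerSumEval σ t wgt (by simp [wgt]) (curState 1 h) hx h, ← mul_add]
  apply mul_le_mul_of_nonneg_left ?_ (trajProb_nonneg hσ 1 h)
  set x := curState 1 h with hxdef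
  obtain ⟨hpos, hsum, -⟩ := hσ 1 h
  by_cases hx0 : x = 0
  · simp [chi, wgt, hx0]
  · have hw : wgt x = 2^x + 2 := by simp [wgt, hx0]
    have hw' : wgt (x+1) = 2^(x+1) + 2 := by simp [wgt]
    have hc : chi x = 1 := by simp [chi, hx0]
    rw [hc, hw, hw', if_neg hx0, if_neg hx0]
    have hq : (1/2:ℝ)^x * 2^x = 1 := by
      rw [← mul_pow]; norm_num
    have hqn : (0:ℝ) ≤ (1/2:ℝ)^x := by positivity
    have e2 : (1/2:ℝ) * ((2:ℝ)^(x+1) + 2) = 2^x + 1 := by rw [pow_succ]; ring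
    have e1 : (1 - (1/2:ℝ)^x) * ((2:ℝ)^x + 2) ≤ 2^x + 1 := by nlinarith
    have h1 := hpos 1
    have h2 := hpos 2
    rw [e2]
    have e3 : σ 1 h 1 * ((2:ℝ)^x+1) + σ 1 h 2 * ((2:ℝ)^x+1) = 2^x+1 := by
      rw [← add_mul, hsum, one_mul]
    nlinarith [mul_le_mul_of_nonneg_left e1 h1]

lemma sum_Pne_le {σ} (hσ : IsStrategy σ) (T : ℕ) :
    ∑ t ∈ range T, Pne σ 1 t ≤ 4 := by
  have key : ∀ T, ∑ t ∈ range T, Pne σ 1 t + Wfun σ T ≤ 4 := by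
    intro T
    induction T with
    | zero => simp [W_zero]
    | succ T ih =>
        rw [Finset.sum_range_succ]
        have := W_step hσ T
        linarith
  have := key T
  have := W_nonneg hσ T
  linarith

lemma sigmaPhi_strategy (n : ℕ) : IsStrategy (sigmaPhi n) := by
  intro x₀ h
  refine ⟨fun a => ?_, ?_, fun a ha1 ha2 => ?_⟩
  · unfold sigmaPhi; split_ifs <;> norm_num
  · unfold sigmaPhi
    by_cases hc : curState x₀ h ≤ n <;> simp [hc]
  · unfold sigmaPhi
    by_cases hc : curState x₀ h ≤ n <;> simp [hc, ha1, ha2]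

lemma cur_phi (n : ℕ) : ∀ h, trajProb (sigmaPhi n) 1 h ≠ 0 →
    curState 1 h = 0 ∨ curState 1 h = min (1 + h.length) (n+1) := by
  intro h
  induction h with
  | nil =>
      intro _
      right
      show (1:ℕ) = min (1 + 0) (n+1)
      omega
  | cons p h ih =>
      intro hne
      rw [trajProb_cons] at hne
      have h1 : trajProb (sigmaPhi n) 1 h ≠ 0 := fun h0 => hne (by simp [h0])
      have h2 : sigmaPhi n 1 h p.1 ≠ 0 := fun h0 => hne (by simp [h0])
      have h3 : Pkernel p.1 (curState 1 h) p.2 ≠ 0 := fun h0 => hne (by simp [h0])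
      rw [curState_cons]
      by_cases hy0 : p.2 = 0
      · exact Or.inl hy0
      right
      have hx0 : curState 1 h ≠ 0 := by
        intro h0
        unfold Pkernel at h3
        rw [if_pos h0, if_neg hy0] at h3
        exact h3 rfl
      have hxm : curState 1 h = min (1 + h.length) (n+1) := (ih h1).resolve_left hx0
      have ha : p.1 = (if curState 1 h ≤ n then 2 else 1) := by
        by_contra hc
        unfold sigmaPhi at h2
        rw [if_neg hc] at h2
        exact h2 rfl
      simp only [List.length_cons]
      by_cases hxn : curState 1 h ≤ n
      · rw [if_pos hxn] at ha
        have hy : p.2 = curState 1 h + 1 := by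
          unfold Pkernel at h3
          rw [if_neg hx0, if_neg (by rw [ha]; norm_num), if_neg hy0] at h3
          by_contra hc
          rw [if_neg hc] at h3
          exact h3 rfl
        omega
      · rw [if_neg hxn] at ha
        have hy : p.2 = curState 1 h := by
          unfold Pkernel at h3
          rw [if_neg hx0, if_pos ha, if_neg hy0] at h3
          by_contra hc
          rw [if_neg hc] at h3
          exact h3 rfl
        omega

/-- Closed form for `Pne` under `φⁿ`. -/
noncomputable def pphi (n t : ℕ) : ℝ :=
  (1/2:ℝ)^(min t n) * (1 - (1/2:ℝ)^(n+1))^(t - n)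

lemma Pne_phi (n t : ℕ) : Pne (sigmaPhi n) 1 t = pphi n t := by
  have hstrat := sigmaPhi_strategy n
  induction t with
  | zero =>
      rw [Pne_eq' hstrat 0]
      rw [show HF 0 = {[]} from rfl, Finset.sum_singleton]
      show trajProb (sigmaPhi n) 1 [] * chi (curState 1 []) = pphi n 0
      rw [show trajProb (sigmaPhi n) 1 [] = 1 from rfl,
        show curState 1 [] = 1 from rfl]
      simp [chi, pphi]
  | succ t ih =>
      rw [Pne_eq' hstrat (t+1), sum_step hstrat t chi]
      set s : ℝ := if t < n then (1/2:ℝ) else 1 - (1/2:ℝ)^(n+1) with hs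
      have key : ∀ h ∈ HF t, trajProb (sigmaPhi n) 1 h *
            (∑ p ∈ St (t+1), sigmaPhi n 1 h p.1 * Pkernel p.1 (curState 1 h) p.2 * chi p.2)
          = s * (trajProb (sigmaPhi n) 1 h * chi (curState 1 h)) := by
        intro h hh
        by_cases htp : trajProb (sigmaPhi n) 1 h = 0
        · simp [htp]
        have hx : curState 1 h ≤ t + 1 := by
          have := (traj_support hstrat h htp).1
          rw [Hfin_length hh] at this
          omega
        rw [innerSumEval (sigmaPhi n) t chi (by simp [chi]) (curState 1 h) hx h]
        rcases cur_phi n h htp with h0 | hm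
        · rw [h0]
          simp [chi]
        · have hlen : h.length = t := Hfin_length hh
          rw [hlen] at hm
          have hx0 : curState 1 h ≠ 0 := by omega
          rw [if_neg hx0, if_neg hx0]
          have hc1 : chi (curState 1 h) = 1 := by simp [chi, hx0]
          have hc2 : chi (curState 1 h + 1) = 1 := by simp [chi]
          rw [hc1, hc2]
          by_cases hcase : t < n
          · have hxn : curState 1 h ≤ n := by omega
            have e1 : sigmaPhi n 1 h 1 = 0 := by simp [sigmaPhi, hxn]
            have e2 : sigmaPhi n 1 h 2 = 1 := by simp [sigmaPhi, hxn]
            rw [e1, e2, hs, if_pos hcase]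
            ring
          · have hxn : ¬ curState 1 h ≤ n := by omega
            have hxe : curState 1 h = n + 1 := by omega
            have e1 : sigmaPhi n 1 h 1 = 1 := by simp [sigmaPhi, hxn]
            have e2 : sigmaPhi n 1 h 2 = 0 := by simp [sigmaPhi, hxn]
            rw [e1, e2, hs, if_neg hcase, hxe]
            ring
      rw [Finset.sum_congr rfl key, ← Finset.mul_sum, ← Pne_eq' hstrat t, ih]
      unfold pphi
      by_cases hcase : t < n
      · rw [hs, if_pos hcase,
          show min (t+1) n = min t n + 1 by omega,
          show (t+1) - n = t - n by omega, pow_succ]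
        ring
      · rw [hs, if_neg hcase,
          show min (t+1) n = min t n by omega,
          show (t+1) - n = (t - n) + 1 by omega, pow_succ]
        ring

lemma hasSum_phi (n : ℕ) : HasSum (fun k => Pne (sigmaPhi n) 1 (n + k)) 2 := by
  have hple : (1/2:ℝ)^(n+1) ≤ 1 := pow_le_one₀ (by norm_num) (by norm_num)
  have hppos : (0:ℝ) < (1/2:ℝ)^(n+1) := by positivity
  have hr0 : (0:ℝ) ≤ 1 - (1/2:ℝ)^(n+1) := by linarith
  have hr1 : 1 - (1/2:ℝ)^(n+1) < 1 := by linarith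
  have hg := (hasSum_geometric_of_lt_one hr0 hr1).mul_left ((1/2:ℝ)^n)
  have heq : (fun k => Pne (sigmaPhi n) 1 (n + k))
      = fun k => (1/2:ℝ)^n * (1 - (1/2:ℝ)^(n+1))^k := by
    funext k
    rw [Pne_phi]
    unfold pphi
    rw [show min (n+k) n = n by omega, show n + k - n = k by omega]
  rw [heq]
  have hval : (1/2:ℝ)^n * (1 - (1 - (1/2:ℝ)^(n+1)))⁻¹ = 2 := by
    have e : 1 - (1 - (1/2:ℝ)^(n+1)) = (1/2:ℝ)^(n+1) := by ring
    have hp : ((1/2:ℝ)^n) ≠ 0 := by positivity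
    rw [e, pow_succ, mul_inv, ← mul_assoc, mul_inv_cancel₀ hp]
    norm_num
  rwa [hval] at hg

lemma sum_Icc_Pne_le {σ} (hσ : IsStrategy σ) (n N : ℕ) :
    ∑ t ∈ Icc (n+1) N, Pne σ 1 (t-1) ≤ 4 := by
  rw [← Finset.Ico_add_one_right_eq_Icc, Finset.sum_Ico_eq_sum_range]
  set m := N + 1 - (n + 1) with hm
  have e1 : ∑ i ∈ range m, Pne σ 1 (n + 1 + i - 1)
      = ∑ i ∈ range m, Pne σ 1 (n + i) :=
    Finset.sum_congr rfl (fun i _ => by congr 1; omega)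
  have e2 : ∑ i ∈ range m, Pne σ 1 (n + i)
      = ∑ t ∈ Ico n (n + m), Pne σ 1 t := by
    rw [Finset.sum_Ico_eq_sum_range, show n + m - n = m by omega]
  rw [e1, e2]
  calc ∑ t ∈ Ico n (n + m), Pne σ 1 t
      ≤ ∑ t ∈ range (n + m), Pne σ 1 t := by
        apply Finset.sum_le_sum_of_subset_of_nonneg
        · intro t ht
          rw [mem_range]
          rw [Finset.mem_Ico] at ht
          omega
        · intro t _ _
          exact Pne_nonneg hσ t
    _ ≤ 4 := sum_Pne_le hσ (n + m)

lemma sum_Icc_phi (n m : ℕ) :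
    ∑ t ∈ Icc (n+1) (n+m), -(Pne (sigmaPhi n) 1 (t-1))
      = -∑ i ∈ range m, Pne (sigmaPhi n) 1 (n + i) := by
  rw [← Finset.Ico_add_one_right_eq_Icc, Finset.sum_Ico_eq_sum_range,
    show n + m + 1 - (n + 1) = m by omega, ← Finset.sum_neg_distrib]
  exact Finset.sum_congr rfl (fun i _ => by congr 2; omega)

/-- In Example 5.1 with cost `c(x,a) = -1` for `x ≥ 1`, `c(0,·) = 0`, condition (C) fails:
for every `n`, `inf_{N ≥ n} inf_π ∑_{t=n+1}^N E_1^π[c(X_{t-1},A_t)] ≤ -2`; indeed under the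
strategy `φⁿ` the tail expected cost is `∑_{t=n+1}^∞ E_1^{φⁿ}[c(X_{t-1},A_t)] = -2`. -/
theorem condition_C_fails :
    ∀ n : ℕ,
      (⨅ N : {N : ℕ // n ≤ N}, ⨅ σ : {σ : ℕ → List (ℕ × ℕ) → ℕ → ℝ // IsStrategy σ},
          ∑ t ∈ Finset.Icc (n+1) N.1, -(Pne σ.1 1 (t-1))) ≤ -2
        ∧ (∑' t : ℕ, -(Pne (sigmaPhi n) 1 (n + t))) = -2 := by
  intro n
  have hφ : IsStrategy (sigmaPhi n) := sigmaPhi_strategy n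
  haveI : Nonempty {σ : ℕ → List (ℕ × ℕ) → ℕ → ℝ // IsStrategy σ} := ⟨⟨sigmaPhi n, hφ⟩⟩
  constructor
  · -- the infimum part
    have hbdd1 : ∀ (N : {N : ℕ // n ≤ N}) (σs : {σ : ℕ → List (ℕ × ℕ) → ℕ → ℝ // IsStrategy σ}),
        (-4:ℝ) ≤ ∑ t ∈ Finset.Icc (n+1) N.1, -(Pne σs.1 1 (t-1)) := by
      intro N σs
      have h4 := sum_Icc_Pne_le σs.2 n N.1
      rw [Finset.sum_neg_distrib]
      linarith
    set g : {N : ℕ // n ≤ N} → ℝ := fun N =>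
      ⨅ σ : {σ : ℕ → List (ℕ × ℕ) → ℕ → ℝ // IsStrategy σ},
        ∑ t ∈ Finset.Icc (n+1) N.1, -(Pne σ.1 1 (t-1)) with hg
    have hg_ge : ∀ N, (-4:ℝ) ≤ g N := fun N => le_ciInf (hbdd1 N)
    have hgbdd : BddBelow (Set.range g) := ⟨-4, by rintro _ ⟨N, rfl⟩; exact hg_ge N⟩
    apply le_of_forall_pos_le_add
    intro ε hε
    have htend := (hasSum_phi n).tendsto_sum_nat
    have hev : ∀ᶠ m in Filter.atTop,
        2 - ε < ∑ i ∈ range m, Pne (sigmaPhi n) 1 (n + i) :=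
      htend.eventually (eventually_gt_nhds (by linarith))
    obtain ⟨m, hm⟩ := hev.exists
    have hinnerbdd : BddBelow (Set.range fun σs : {σ : ℕ → List (ℕ × ℕ) → ℕ → ℝ // IsStrategy σ} =>
        ∑ t ∈ Finset.Icc (n+1) ((⟨n+m, Nat.le_add_right n m⟩ : {N : ℕ // n ≤ N}).1),
          -(Pne σs.1 1 (t-1))) :=
      ⟨-4, by rintro _ ⟨σs, rfl⟩; exact hbdd1 _ σs⟩
    calc (⨅ N : {N : ℕ // n ≤ N}, g N) ≤ g ⟨n+m, Nat.le_add_right n m⟩ := ciInf_le hgbdd _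
      _ ≤ ∑ t ∈ Finset.Icc (n+1) (n+m), -(Pne (sigmaPhi n) 1 (t-1)) :=
          ciInf_le hinnerbdd ⟨sigmaPhi n, hφ⟩
      _ = -∑ i ∈ range m, Pne (sigmaPhi n) 1 (n + i) := sum_Icc_phi n m
      _ ≤ -2 + ε := by linarith
  · exact ((hasSum_phi n).neg).tsum_eq
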